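/- For all integers n ≥ 1 and k ≥ 1, if a string (s_i)_{i∈[0,kn−1]} with s_i ∈ [0,n−1] satisfies rules (R1) and (R2), then the deterministic automaton structure with state set {0,…,n−1}, initial state 0, and transition function δ(q,σ_j) = s_{kq+j} for q ∈ [0,n−1] and j ∈ [0,k−1] is initially connected, i.e., every state is reachable from 0 by some word. -/

import Mathlib

/-- Rule (R1). -/
def RuleR1 (n k : ℕ) (s : Fin (k * n) → Fin n) : Prop :=
  ∀ m : ℕ, 2 ≤ m → m ≤ n - 1 → ∀ i : Fin (k * n), (s i : ℕ) = m →
    ∃ j : Fin (k * n), (j : ℕ) < (i : ℕ) ∧ (s j : ℕ) = m - 1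

/-- Rule (R2). -/
def RuleR2 (n k : ℕ) (s : Fin (k * n) → Fin n) : Prop :=
  ∀ m : ℕ, 1 ≤ m → m ≤ n - 1 → ∃ j : Fin (k * n), (j : ℕ) < k * m ∧ (s j : ℕ) = m

/-- The transition function determined by a string: `δ(q, σ_j) = s_{k q + j}`. -/
def stringDelta {n k : ℕ} (s : Fin (k * n) → Fin n) (q : Fin n) (σ : Fin k) : Fin n :=
  s ⟨k * (q : ℕ) + (σ : ℕ), by
    calc k * (q : ℕ) + (σ : ℕ) < k * (q : ℕ) + k := Nat.add_lt_add_left σ.isLt _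
      _ = k * ((q : ℕ) + 1) := (Nat.mul_succ k (q : ℕ)).symm
      _ ≤ k * n := Nat.mul_le_mul_left k q.isLt⟩

/-- Extension of the transition function to words. -/
def deltaStar {n k : ℕ} (d : Fin n → Fin k → Fin n) : Fin n → List (Fin k) → Fin n
  | q, [] => q
  | q, a :: w => deltaStar d (d q a) w

/-!
Every state `m ≥ 1` occurs in the string at a position `j < k m`, i.e. as the transition
`δ(⌊j / k⌋, σ_{j mod k})` out of a state `⌊j / k⌋ < m`. By strong induction on `m`, that
smaller state is reachable, hence so is `m`.
-/

theorem deltaStar_concat {n k : ℕ} (d : Fin n → Fin k → Fin n) (q : Fin n)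
    (w : List (Fin k)) (a : Fin k) :
    deltaStar d q (w ++ [a]) = d (deltaStar d q w) a := by
  induction w generalizing q with
  | nil => rfl
  | cons b w ih => exact ih (d q b)

theorem exists_stringDelta_eq {n k : ℕ} (s : Fin (k * n) → Fin n) (j : Fin (k * n)) :
    ∃ (q : Fin n) (σ : Fin k), (q : ℕ) = j / k ∧ stringDelta s q σ = s j := by
  have hk : 0 < k := Nat.pos_of_mul_pos_right (Nat.zero_lt_of_lt j.isLt)
  refine ⟨⟨j / k, Nat.div_lt_of_lt_mul j.isLt⟩, ⟨j % k, Nat.mod_lt _ hk⟩, rfl, ?_⟩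
  exact congrArg s (Fin.ext (Nat.div_add_mod j k))

theorem stmt2_general (n k : ℕ) (hn : 1 ≤ n)
    (s : Fin (k * n) → Fin n) (h2 : RuleR2 n k s) :
    ∀ q : Fin n, ∃ w : List (Fin k), deltaStar (stringDelta s) ⟨0, hn⟩ w = q := by
  intro q
  induction q using WellFoundedLT.induction with
  | ind q ih =>
    obtain hq | hq := Nat.eq_zero_or_pos (q : ℕ)
    · exact ⟨[], Fin.ext hq.symm⟩
    obtain ⟨j, hjq, hsj⟩ := h2 q hq (Nat.le_sub_one_of_lt q.isLt)
    obtain ⟨p, σ, hp, hpσ⟩ := exists_stringDelta_eq s j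
    have hpq : p < q := by
      rw [Fin.lt_def, hp]
      exact Nat.div_lt_of_lt_mul hjq
    obtain ⟨w, hw⟩ := ih p hpq
    refine ⟨w ++ [σ], ?_⟩
    rw [deltaStar_concat, hw, hpσ]
    exact Fin.ext hsj

/-- The automaton structure determined by a string satisfying (R1) and (R2),
with state set `{0, …, n-1}`, initial state `0`, and `δ(q, σ_j) = s_{k q + j}`,
is initially connected: every state is reachable from `0`. -/
theorem stmt2 (n k : ℕ) (hn : 1 ≤ n) (hk : 1 ≤ k)
    (s : Fin (k * n) → Fin n) (h1 : RuleR1 n k s) (h2 : RuleR2 n k s) :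
    ∀ q : Fin n, ∃ w : List (Fin k), deltaStar (stringDelta s) ⟨0, hn⟩ w = q :=
  stmt2_general n k hn s h2
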